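/- Let p and q be probability distributions on [n]. Then the expected cost of guesswork under mismatch between p and q satisfies δ(p,q) = min_{G_q ∈ 𝒢_q} K_p(G_p, G_q) = Σ_{(i,j) : p_i > p_j} (p_i − p_j) · 1{q_i < q_j}, where G_p is any optimal guessing function for p, 𝒢_q is the set of optimal guessing functions for q, and the final sum is over ordered pairs (i,j) ∈ [n] × [n] with p_i > p_j. -/

import Mathlib

open Finset

/-- `p` is a probability distribution on `Fin n` (representing `[n] = {1,…,n}`). -/
def IsDist {n : ℕ} (p : Fin n → ℝ) : Prop :=
  (∀ i, 0 ≤ p i) ∧ ∑ i, p i = 1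

/-- The guesswork `E_p[G] = Σ_i p_i · G(i)`, where the guessing function `G`
takes values in `{1,…,n}` (hence the `+ 1` on the `Fin n` value). -/
noncomputable def guesswork {n : ℕ} (p : Fin n → ℝ) (G : Equiv.Perm (Fin n)) : ℝ :=
  ∑ i, p i * (((G i : ℕ) : ℝ) + 1)

/-- `G` is an optimal guessing function for `p`. -/
def IsOptimal {n : ℕ} (p : Fin n → ℝ) (G : Equiv.Perm (Fin n)) : Prop :=
  ∀ H : Equiv.Perm (Fin n), guesswork p G ≤ guesswork p H

/-- The expected cost `Δ_p(G₁, G₂) = Σ_i p_i (G₂(i) − G₁(i))`. -/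
noncomputable def Delta {n : ℕ} (p : Fin n → ℝ) (G1 G2 : Equiv.Perm (Fin n)) : ℝ :=
  ∑ i, p i * (((G2 i : ℕ) : ℝ) - ((G1 i : ℕ) : ℝ))

/-- The probability-weighted Kendall tau signed divergence
`K_p(σ₁,σ₂) = Σ_{(i,j): σ₁(i)<σ₁(j)} (p_i − p_j) · 1{σ₂(i) > σ₂(j)}`. -/
noncomputable def Kdiv {n : ℕ} (p : Fin n → ℝ) (σ1 σ2 : Equiv.Perm (Fin n)) : ℝ :=
  ∑ i, ∑ j, if σ1 i < σ1 j ∧ σ2 j < σ2 i then p i - p j else 0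

/-- The expected cost of guesswork under mismatch
`δ(p,q) = min_{G_q ∈ 𝒢_q} Δ_p(G_p, G_q)` (as an infimum over the, finite and
nonempty, set of values attained by optimal guessing functions for `q`). -/
noncomputable def mismatchCost {n : ℕ} (p q : Fin n → ℝ)
    (Gp : Equiv.Perm (Fin n)) : ℝ :=
  sInf {x | ∃ Gq : Equiv.Perm (Fin n), IsOptimal q Gq ∧ x = Delta p Gp Gq}

/-- The total variation distance `d_TV(p,q) = (1/2) Σ_i |p_i − q_i|`. -/
noncomputable def dTV {n : ℕ} (p q : Fin n → ℝ) : ℝ :=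
  (1/2) * ∑ i, |p i - q i|

/-- `τ` is an adjacent transposition: it exchanges two consecutive elements
`j` and `j+1` and fixes everything else. -/
def IsAdjTransposition {n : ℕ} (τ : Equiv.Perm (Fin n)) : Prop :=
  ∃ j k : Fin n, (j : ℕ) + 1 = (k : ℕ) ∧ τ = Equiv.swap j k

/-- `M` is a set of disjoint pairs: each pair has distinct entries, and each
element of `[n]` occurs in at most one pair of `M`. -/
def DisjointPairs {n : ℕ} (M : Finset (Fin n × Fin n)) : Prop :=
  (∀ m ∈ M, m.1 ≠ m.2) ∧
  ∀ k : Fin n, ∀ m1 ∈ M, ∀ m2 ∈ M,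
    (k = m1.1 ∨ k = m1.2) → (k = m2.1 ∨ k = m2.2) → m1 = m2

lemma coe_perm_eq_sum {n : ℕ} (σ : Equiv.Perm (Fin n)) (i : Fin n) :
    ((σ i : ℕ) : ℝ) = ∑ j, if σ j < σ i then (1:ℝ) else 0 := by
  rw [Finset.sum_boole]
  norm_num
  have : univ.filter (fun j => σ j < σ i) = (Finset.Iio (σ i)).map σ.symm.toEmbedding := by
    ext j
    simp only [mem_filter, mem_univ, true_and, Finset.mem_map, Finset.mem_Iio,
      Equiv.coe_toEmbedding, Equiv.symm_apply_eq]
    constructor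
    · intro h; exact ⟨σ j, h, rfl⟩
    · rintro ⟨k, hk, rfl⟩; simpa using hk
  rw [this, Finset.card_map, Fin.card_Iio]

lemma optimal_sorted {n : ℕ} {p : Fin n → ℝ} {G : Equiv.Perm (Fin n)}
    (h : IsOptimal p G) : ∀ i j, G i < G j → p j ≤ p i := by
  intro i j hij
  by_contra hpc
  push_neg at hpc
  have hne : i ≠ j := fun e => by subst e; exact lt_irrefl _ hij
  have key := h (G * Equiv.swap i j)
  have h1 : guesswork p (G * Equiv.swap i j)
      = ∑ k, p (Equiv.swap i j k) * (((G k : ℕ) : ℝ) + 1) := by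
    unfold guesswork
    rw [← Equiv.sum_comp (Equiv.swap i j) (fun k => p (Equiv.swap i j k) * (((G k : ℕ) : ℝ) + 1))]
    simp [Equiv.Perm.mul_apply]
  have h2 : guesswork p (G * Equiv.swap i j) - guesswork p G
      = ∑ k, (p (Equiv.swap i j k) - p k) * (((G k : ℕ) : ℝ) + 1) := by
    rw [h1]; unfold guesswork
    rw [← Finset.sum_sub_distrib]
    congr 1; ext k; ring
  have h3 : ∑ k, (p (Equiv.swap i j k) - p k) * (((G k : ℕ) : ℝ) + 1)
      = (p i - p j) * (((G j : ℕ) : ℝ) - ((G i : ℕ) : ℝ)) := by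
    rw [← Finset.sum_subset (Finset.subset_univ ({i, j} : Finset (Fin n)))]
    · rw [Finset.sum_pair hne, Equiv.swap_apply_left, Equiv.swap_apply_right]; ring
    · intro k _ hk
      simp only [Finset.mem_insert, Finset.mem_singleton, not_or] at hk
      rw [Equiv.swap_apply_of_ne_of_ne hk.1 hk.2]; ring
  have hGlt : ((G i : ℕ) : ℝ) < ((G j : ℕ) : ℝ) := by exact_mod_cast hij
  nlinarith [h2, h3, key]

lemma sorted_optimal {n : ℕ} {p : Fin n → ℝ} {G : Equiv.Perm (Fin n)}
    (h : ∀ i j, G i < G j → p j ≤ p i) : IsOptimal p G := by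
  intro H
  have hav : Antivary p (fun i => ((G i : ℕ) : ℝ)) := by
    intro i j hij
    exact h i j (by simpa using hij)
  have key := hav.sum_smul_le_sum_smul_comp_perm (σ := G⁻¹ * H)
  simp only [smul_eq_mul, Function.comp, Equiv.Perm.mul_apply, Equiv.Perm.coe_inv, Equiv.apply_symm_apply] at key
  unfold guesswork
  simp only [mul_add, mul_one, Finset.sum_add_distrib]
  exact add_le_add_left key _

lemma force_lt {n : ℕ} {r : Fin n → ℝ} {G : Equiv.Perm (Fin n)}
    (hs : ∀ i j, G i < G j → r j ≤ r i) {i j : Fin n} (h : r j < r i) : G i < G j := by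
  rcases lt_trichotomy (G i) (G j) with h' | h' | h'
  · exact h'
  · exact absurd (G.injective h') fun e => by subst e; exact lt_irrefl _ h
  · exact absurd (hs j i h') (not_le.mpr h)

lemma delta_eq_kdiv {n : ℕ} (p : Fin n → ℝ) (σ1 σ2 : Equiv.Perm (Fin n)) :
    Delta p σ1 σ2 = Kdiv p σ1 σ2 := by
  have hD : Delta p σ1 σ2 = ∑ i, ∑ j,
      p i * ((if σ2 j < σ2 i then (1:ℝ) else 0) - (if σ1 j < σ1 i then (1:ℝ) else 0)) := by
    unfold Delta
    refine Finset.sum_congr rfl fun i _ => ?_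
    rw [coe_perm_eq_sum σ2 i, coe_perm_eq_sum σ1 i, ← Finset.sum_sub_distrib, Finset.mul_sum]
  have hK : Kdiv p σ1 σ2 = ∑ i, ∑ j,
      ((if σ1 i < σ1 j ∧ σ2 j < σ2 i then p i else 0)
        - (if σ1 j < σ1 i ∧ σ2 i < σ2 j then p i else 0)) := by
    unfold Kdiv
    have e1 : ∀ i j : Fin n, (if σ1 i < σ1 j ∧ σ2 j < σ2 i then p i - p j else 0)
        = (if σ1 i < σ1 j ∧ σ2 j < σ2 i then p i else 0)
          - (if σ1 i < σ1 j ∧ σ2 j < σ2 i then p j else 0) := by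
      intro i j; split <;> ring
    simp_rw [e1, Finset.sum_sub_distrib]
    congr 1
    rw [Finset.sum_comm]
  rw [hD, hK]
  refine Finset.sum_congr rfl fun i _ => Finset.sum_congr rfl fun j _ => ?_
  by_cases hij : i = j
  · subst hij; simp
  · have h1 : σ1 i ≠ σ1 j := fun e => hij (σ1.injective e)
    have h2 : σ2 i ≠ σ2 j := fun e => hij (σ2.injective e)
    rcases h1.lt_or_gt with h1' | h1' <;> rcases h2.lt_or_gt with h2' | h2' <;>
      simp [h1', h2', h1'.not_gt, h2'.not_gt, not_and, not_lt, h1'.le, h2'.le] <;> ring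

lemma exists_good_perm {n : ℕ} (p q : Fin n → ℝ) :
    ∃ G : Equiv.Perm (Fin n), (∀ i j, G i < G j → q j ≤ q i) ∧
      (∀ i j, q i = q j → p j < p i → G i < G j) := by
  classical
  set f : Fin n → ℝ ×ₗ ℝ := fun i => toLex (-q i, -p i) with hf
  refine ⟨(Tuple.sort f)⁻¹, ?_, ?_⟩
  · intro i j hij
    have hm : f i ≤ f j := by
      have := Tuple.monotone_sort f (le_of_lt hij)
      simpa [Function.comp, Equiv.apply_symm_apply] using this
    rw [hf] at hm
    rcases Prod.Lex.le_iff.mp hm with h | ⟨h, _⟩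
    · simp only [ofLex_toLex] at h; linarith
    · simp only [ofLex_toLex] at h; linarith
  · intro i j hq hp
    have hflt : f i < f j := by
      rw [hf]
      exact Prod.Lex.lt_iff.mpr (Or.inr ⟨by simp [hq], by simpa using hp⟩)
    have hne : (Tuple.sort f)⁻¹ i ≠ (Tuple.sort f)⁻¹ j := by
      intro e
      have : i = j := by simpa using congrArg (Tuple.sort f) e
      subst this; exact lt_irrefl _ hp
    rcases hne.lt_or_gt with h | h
    · exact h
    · exfalso
      have hm : f j ≤ f i := by
        have := Tuple.monotone_sort f (le_of_lt h)
        simpa [Function.comp, Equiv.apply_symm_apply] using this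
      exact absurd hm (not_le.mpr hflt)

/-- `δ(p,q) = min_{G_q ∈ 𝒢_q} K_p(G_p, G_q)
= Σ_{(i,j): p_i > p_j} (p_i − p_j) · 1{q_i < q_j}`, for any optimal guessing
function `G_p` for `p`. -/
theorem mismatchCost_eq_kdiv_min_eq_sum {n : ℕ} (p q : Fin n → ℝ)
    (hp : IsDist p) (hq : IsDist q) (Gp : Equiv.Perm (Fin n))
    (hGp : IsOptimal p Gp) :
    mismatchCost p q Gp =
        sInf {x | ∃ Gq : Equiv.Perm (Fin n), IsOptimal q Gq ∧ x = Kdiv p Gp Gq} ∧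
      mismatchCost p q Gp =
        ∑ i, ∑ j, if p j < p i ∧ q i < q j then p i - p j else 0 := by
  classical
  have hGps := optimal_sorted hGp
  obtain ⟨Gq, hGqs, hGqt⟩ := exists_good_perm p q
  have hGqopt : IsOptimal q Gq := sorted_optimal hGqs
  set S := ∑ i, ∑ j, if p j < p i ∧ q i < q j then p i - p j else 0 with hS
  have setEq : {x | ∃ G : Equiv.Perm (Fin n), IsOptimal q G ∧ x = Delta p Gp G} =
      {x | ∃ G : Equiv.Perm (Fin n), IsOptimal q G ∧ x = Kdiv p Gp G} := by
    ext x
    simp only [Set.mem_setOf_eq]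
    exact exists_congr fun G => and_congr_right fun _ => by rw [delta_eq_kdiv]
  have lower : ∀ H : Equiv.Perm (Fin n), IsOptimal q H → S ≤ Kdiv p Gp H := by
    intro H hH
    have hHs := optimal_sorted hH
    rw [hS]
    unfold Kdiv
    refine Finset.sum_le_sum fun i _ => Finset.sum_le_sum fun j _ => ?_
    by_cases hc : p j < p i ∧ q i < q j
    · rw [if_pos hc, if_pos ⟨force_lt hGps hc.1, force_lt hHs hc.2⟩]
    · rw [if_neg hc]
      split_ifs with h
      · linarith [hGps i j h.1]
      · exact le_refl 0
  have attain : Kdiv p Gp Gq = S := by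
    rw [hS]
    unfold Kdiv
    refine Finset.sum_congr rfl fun i _ => Finset.sum_congr rfl fun j _ => ?_
    by_cases hp1 : p j < p i
    · by_cases hq1 : q i < q j
      · rw [if_pos ⟨force_lt hGps hp1, force_lt hGqs hq1⟩, if_pos ⟨hp1, hq1⟩]
      · have hcond : ¬ (Gp i < Gp j ∧ Gq j < Gq i) := by
          rintro ⟨_, h2⟩
          have hle : q i ≤ q j := hGqs j i h2
          have heq : q i = q j := le_antisymm hle (not_lt.mp hq1)
          exact absurd (hGqt i j heq hp1) (lt_asymm h2)
        rw [if_neg hcond, if_neg (show ¬ (p j < p i ∧ q i < q j) from fun h => hq1 h.2)]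
    · rw [if_neg (show ¬ (p j < p i ∧ q i < q j) from fun h => hp1 h.1)]
      split_ifs with h
      · linarith [hGps i j h.1, not_lt.mp hp1]
      · rfl
  have least : IsLeast {x | ∃ G : Equiv.Perm (Fin n), IsOptimal q G ∧ x = Kdiv p Gp G} S :=
    ⟨⟨Gq, hGqopt, attain.symm⟩, by rintro x ⟨H, hH, rfl⟩; exact lower H hH⟩
  constructor
  · unfold mismatchCost
    rw [setEq]
  · unfold mismatchCost
    rw [setEq, least.csInf_eq]
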